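/- Let d ∈ ℕ, let ν be a Lévy measure on ℝ, let G ∈ L¹_loc(ℝ^d), let 0 < r < R, and assume that ∫_{|ρ|>1} |ρ| (∫_{1/|ρ|}^∞ d_{G_R}(α) λ¹(dα)) ν(dρ) < ∞ and ∫_{|ρ|>1} |ρ|² (∫_0^{1/|ρ|} α·d_{G_R}(α) λ¹(dα)) ν(dρ) < ∞, where G_R(x) := ∫_{B_R(x)} |G(y)| λ^d(dy). Let (φ_n) be a sequence of bounded measurable functions on ℝ^d with φ_n(y) = 0 for ‖y‖ ≥ r, ‖φ_n‖_∞ → 0, and ‖G*φ_n‖_{L²(ℝ^d)} → 0 as n → ∞. Then ∫_{ℝ^d} ∫_ℝ |ρ·(φ_n*G)(x)| · 𝟙_{|ρ(φ_n*G)(x)| > 1} ν(dρ) λ^d(dx) → 0 as n → ∞. -/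

import Mathlib

/-!
With `M_n = sup |φ_n|`, the support condition gives `|φ_n * G| ≤ M_n G_r ≤ M_n G_R`. Split `ν` at
`|ρ| = 1`. For `|ρ| ≤ 1` we have `|ρ t| 𝟙_{|ρ t| > 1} ≤ ρ² t²`, so that part is at most
`∫_{|ρ| ≤ 1} ρ² dν · ‖φ_n * G‖²_{L²}`. For `|ρ| > 1` and `M_n ≤ 1` the integrand is at most
`M_n |ρ G_R| 𝟙_{|ρ G_R| > 1}`, whose double integral is finite: from
`|t| 𝟙_{|t| > 1} ≤ (|t| - 1)⁺ + 𝟙_{|t| > 1}`, the layer-cake formula turns the first term into the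
first hypothesis, and the Chebyshev-type bound `(c² / 2) d(c) ≤ ∫_0^c α d(α) dα` controls the
second by the second hypothesis. Both bounds tend to `0`.
-/

open MeasureTheory ENNReal Filter Topology

noncomputable section

/-- `ℝ^d` with the Euclidean structure. -/
abbrev Rd (d : ℕ) := EuclideanSpace ℝ (Fin d)

/-- The distribution function `d_f(α) = λ^d {x : |f x| > α}`. -/
def distFun {d : ℕ} (f : Rd d → ℝ) (α : ℝ) : ℝ≥0∞ := volume {x | α < |f x|}

/-- The convolution `(φ * G)(x) = ∫ G(y) φ(x - y) dy`. -/
def conv {d : ℕ} (φ G : Rd d → ℝ) (x : Rd d) : ℝ := ∫ y, G y * φ (x - y)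

/-- `G_R(x) = ∫_{B_R(x)} |G(y)| dy`. -/
def ballInt {d : ℕ} (G : Rd d → ℝ) (R : ℝ) (x : Rd d) : ℝ := ∫ y in Metric.ball x R, |G y|

def bigJump (t : ℝ) : ℝ≥0∞ := ENNReal.ofReal (if 1 < |t| then |t| else 0)

theorem measurable_bigJump : Measurable bigJump :=
  ENNReal.measurable_ofReal.comp <| Measurable.ite
    (measurableSet_lt measurable_const measurable_abs) measurable_abs measurable_const

theorem bigJump_le_ofReal_sq (t : ℝ) : bigJump t ≤ ENNReal.ofReal (t ^ 2) := by
  unfold bigJump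
  split_ifs with h
  · exact ENNReal.ofReal_le_ofReal (by nlinarith [sq_abs t])
  · simp

theorem bigJump_le_ofReal_mul {s t m : ℝ} (hm : m ≤ 1) (hst : |s| ≤ m * |t|) :
    bigJump s ≤ ENNReal.ofReal m * bigJump t := by
  unfold bigJump
  split_ifs with hs ht ht
  · rw [← ENNReal.ofReal_mul (by nlinarith [abs_nonneg t])]
    exact ENNReal.ofReal_le_ofReal hst
  · nlinarith [abs_nonneg t]
  · simp
  · simp

theorem bigJump_le_ofReal_sub_one_add (t : ℝ) :
    bigJump t ≤ ENNReal.ofReal (|t| - 1) + if 1 < |t| then 1 else 0 := by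
  unfold bigJump
  split_ifs with h
  · calc ENNReal.ofReal |t| = ENNReal.ofReal (|t| - 1 + 1) := by ring_nf
      _ ≤ ENNReal.ofReal (|t| - 1) + 1 := by
        simpa using ENNReal.ofReal_add_le (p := |t| - 1) (q := 1)
  · simp

section

variable {X : Type*} [MeasurableSpace X] (μ : Measure X)

theorem lintegral_ofReal_sub_eq_lintegral_meas_lt [SFinite μ] {f : X → ℝ} (hf : AEMeasurable f μ)
    (c : ℝ) : ∫⁻ x, ENNReal.ofReal (f x - c) ∂μ = ∫⁻ α in Set.Ioi c, μ {x | α < f x} := by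
  set k : X → ℝ → ℝ≥0∞ := fun x α => {p : ℝ × ℝ | p.1 < p.2}.indicator 1 (α, f x)
  have hk : AEMeasurable (Function.uncurry k) (μ.prod (volume.restrict (Set.Ioi c))) :=
    (measurable_one.indicator (measurableSet_lt measurable_fst measurable_snd)).comp_aemeasurable
      (measurable_snd.aemeasurable.prodMk (hf.comp_quasiMeasurePreserving
        Measure.quasiMeasurePreserving_fst))
  calc ∫⁻ x, ENNReal.ofReal (f x - c) ∂μ = ∫⁻ x, (∫⁻ α in Set.Ioi c, k x α) ∂μ := by
        refine lintegral_congr fun x => ?_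
        rw [← Real.volume_Ioo, ← Set.Iio_inter_Ioi, ← Measure.restrict_apply measurableSet_Iio,
          ← lintegral_indicator_one measurableSet_Iio]
        rfl
    _ = ∫⁻ α in Set.Ioi c, ∫⁻ x, k x α ∂μ := lintegral_lintegral_swap hk
    _ = ∫⁻ α in Set.Ioi c, μ {x | α < f x} := by
        refine lintegral_congr fun α => ?_
        rw [← lintegral_indicator_one₀ (nullMeasurableSet_lt aemeasurable_const hf)]
        rfl

theorem ofReal_sq_div_two_mul_meas_lt_le (f : X → ℝ) {c : ℝ} (hc : 0 < c) :
    ENNReal.ofReal (c ^ 2 / 2) * μ {x | c < f x} ≤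
      ∫⁻ α in Set.Ioc 0 c, ENNReal.ofReal α * μ {x | α < f x} := by
  have hc2 : ∫⁻ α in Set.Ioc 0 c, ENNReal.ofReal α = ENNReal.ofReal (c ^ 2 / 2) := by
    rw [← ofReal_integral_eq_lintegral_ofReal, ← intervalIntegral.integral_of_le hc.le,
      integral_id]
    · ring_nf
    · exact intervalIntegral.intervalIntegrable_id.1
    · exact (ae_restrict_iff' measurableSet_Ioc).2 (.of_forall fun α hα => hα.1.le)
  calc ENNReal.ofReal (c ^ 2 / 2) * μ {x | c < f x}
      = ∫⁻ α in Set.Ioc 0 c, ENNReal.ofReal α * μ {x | c < f x} := by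
        rw [lintegral_mul_const _ ENNReal.measurable_ofReal, hc2]
    _ ≤ ∫⁻ α in Set.Ioc 0 c, ENNReal.ofReal α * μ {x | α < f x} :=
        setLIntegral_mono' measurableSet_Ioc fun α hα =>
          mul_le_mul' le_rfl (measure_mono fun x hx => hα.2.trans_lt hx)

theorem lintegral_bigJump_mul_le [SFinite μ] {f : X → ℝ} (hf : AEMeasurable f μ) {ρ : ℝ}
    (hρ : ρ ≠ 0) :
    ∫⁻ x, bigJump (ρ * f x) ∂μ ≤
      ENNReal.ofReal |ρ| * (∫⁻ α in Set.Ioi (1 / |ρ|), μ {x | α < |f x|}) +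
        2 * (ENNReal.ofReal (|ρ| ^ 2) *
          ∫⁻ α in Set.Ioc 0 (1 / |ρ|), ENNReal.ofReal α * μ {x | α < |f x|}) := by
  have hρ0 : 0 < |ρ| := abs_pos.2 hρ
  set c := 1 / |ρ|
  have hc : 0 < c := by positivity
  have hpt : ∀ x, bigJump (ρ * f x) ≤ ENNReal.ofReal |ρ| * ENNReal.ofReal (|f x| - c) +
      {x | c < |f x|}.indicator (fun _ => 1) x := by
    intro x
    have hsub : |ρ * f x| - 1 = |ρ| * (|f x| - c) := by
      rw [abs_mul, mul_sub, mul_one_div_cancel hρ0.ne']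
    have hind : (1 < |ρ * f x|) ↔ c < |f x| := by
      rw [abs_mul, div_lt_iff₀ hρ0, mul_comm]
    refine (bigJump_le_ofReal_sub_one_add _).trans_eq ?_
    simp only [hsub, ENNReal.ofReal_mul (abs_nonneg ρ), hind, Set.indicator_apply,
      Set.mem_ofPred_eq]
  have hdist : μ {x | c < |f x|} ≤
      2 * (ENNReal.ofReal (|ρ| ^ 2) *
        ∫⁻ α in Set.Ioc 0 c, ENNReal.ofReal α * μ {x | α < |f x|}) := by
    have hinv : 2 * ENNReal.ofReal (|ρ| ^ 2) * ENNReal.ofReal (c ^ 2 / 2) = 1 := by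
      have : 2 * |ρ| ^ 2 * (c ^ 2 / 2) = 1 := by simp only [c]; field_simp
      rw [← ENNReal.ofReal_ofNat, ← ENNReal.ofReal_mul (by norm_num),
        ← ENNReal.ofReal_mul (by positivity), this, ENNReal.ofReal_one]
    calc μ {x | c < |f x|}
        = 2 * ENNReal.ofReal (|ρ| ^ 2) * (ENNReal.ofReal (c ^ 2 / 2) * μ {x | c < |f x|}) := by
          rw [← mul_assoc, hinv, one_mul]
      _ ≤ _ := by
          rw [mul_assoc]
          gcongr
          exact ofReal_sq_div_two_mul_meas_lt_le μ _ hc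
  calc ∫⁻ x, bigJump (ρ * f x) ∂μ
      ≤ ∫⁻ x, (ENNReal.ofReal |ρ| * ENNReal.ofReal (|f x| - c) +
          {x | c < |f x|}.indicator (fun _ => 1) x) ∂μ := lintegral_mono hpt
    _ ≤ ENNReal.ofReal |ρ| * ∫⁻ x, ENNReal.ofReal (|f x| - c) ∂μ + μ {x | c < |f x|} := by
        rw [lintegral_add_left' ((hf.abs.sub_const c).ennreal_ofReal.const_mul _),
          lintegral_const_mul' _ _ ENNReal.ofReal_ne_top]
        gcongr
        simpa using lintegral_indicator_const_le (μ := μ) {x | c < |f x|} 1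
    _ ≤ _ := by
        rw [lintegral_ofReal_sub_eq_lintegral_meas_lt μ hf.abs]
        gcongr

theorem setLIntegral_lintegral_bigJump_mul_lt_top [SFinite μ] {ν : Measure ℝ} {f : X → ℝ}
    (hf : AEMeasurable f μ)
    (h1 : ∫⁻ ρ in {ρ : ℝ | 1 < |ρ|},
        (ENNReal.ofReal |ρ| * ∫⁻ α in Set.Ioi (1 / |ρ|), μ {x | α < |f x|}) ∂ν < ⊤)
    (h2 : ∫⁻ ρ in {ρ : ℝ | 1 < |ρ|},
        (ENNReal.ofReal (|ρ| ^ 2) * ∫⁻ α in Set.Ioc (0 : ℝ) (1 / |ρ|),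
          ENNReal.ofReal α * μ {x | α < |f x|}) ∂ν < ⊤) :
    ∫⁻ ρ in {ρ : ℝ | 1 < |ρ|}, ∫⁻ x, bigJump (ρ * f x) ∂μ ∂ν < ⊤ := by
  have hs : MeasurableSet {ρ : ℝ | 1 < |ρ|} := measurableSet_lt measurable_const measurable_abs
  have hanti : Antitone fun t : ℝ => ∫⁻ α in Set.Ioi t, μ {x | α < |f x|} :=
    fun a b hab => lintegral_mono_set (Set.Ioi_subset_Ioi hab)
  have hm : Measurable fun ρ : ℝ =>
      ENNReal.ofReal |ρ| * ∫⁻ α in Set.Ioi (1 / |ρ|), μ {x | α < |f x|} :=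
    measurable_abs.ennreal_ofReal.mul (hanti.measurable.comp (measurable_const.div measurable_abs))
  calc ∫⁻ ρ in {ρ : ℝ | 1 < |ρ|}, ∫⁻ x, bigJump (ρ * f x) ∂μ ∂ν
      ≤ ∫⁻ ρ in {ρ : ℝ | 1 < |ρ|},
          (ENNReal.ofReal |ρ| * (∫⁻ α in Set.Ioi (1 / |ρ|), μ {x | α < |f x|}) +
            2 * (ENNReal.ofReal (|ρ| ^ 2) *
              ∫⁻ α in Set.Ioc 0 (1 / |ρ|), ENNReal.ofReal α * μ {x | α < |f x|})) ∂ν :=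
        setLIntegral_mono' hs fun ρ hρ =>
          lintegral_bigJump_mul_le μ hf (by rintro rfl; norm_num at hρ)
    _ < ⊤ := by
        rw [lintegral_add_left hm, lintegral_const_mul' _ _ ENNReal.ofNat_ne_top]
        exact ENNReal.add_lt_top.2 ⟨h1, ENNReal.mul_lt_top ENNReal.ofNat_lt_top h2⟩

theorem setLIntegral_compl_bigJump_mul_le (ν : Measure ℝ) (t : ℝ) :
    ∫⁻ ρ in {ρ : ℝ | 1 < |ρ|}ᶜ, bigJump (ρ * t) ∂ν ≤
      (∫⁻ ρ in {ρ : ℝ | 1 < |ρ|}ᶜ, ENNReal.ofReal (min 1 (ρ ^ 2)) ∂ν) * ENNReal.ofReal (t ^ 2) := by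
  rw [← lintegral_mul_const _
    (by fun_prop : Measurable fun ρ : ℝ => ENNReal.ofReal (min 1 (ρ ^ 2)))]
  refine setLIntegral_mono' (measurableSet_lt measurable_const measurable_abs).compl
    fun ρ hρ => ?_
  have hρ1 : ρ ^ 2 ≤ 1 := by
    simp only [Set.mem_compl_iff, Set.mem_ofPred_eq, not_lt] at hρ
    nlinarith [sq_abs ρ, abs_nonneg ρ]
  rw [min_eq_right hρ1, ← ENNReal.ofReal_mul (sq_nonneg ρ), ← mul_pow]
  exact bigJump_le_ofReal_sq _

theorem lintegral_lintegral_bigJump_mul_le [SFinite μ] (ν : Measure ℝ) [SFinite ν] {u g : X → ℝ}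
    (hu : AEMeasurable u μ) {m : ℝ} (hm : m ≤ 1) (hug : ∀ x, |u x| ≤ m * |g x|) :
    ∫⁻ x, ∫⁻ ρ, bigJump (ρ * u x) ∂ν ∂μ ≤
      ENNReal.ofReal m * ∫⁻ ρ, ∫⁻ x, bigJump (ρ * g x) ∂μ ∂ν := by
  have hmeas : AEMeasurable (fun p : X × ℝ => bigJump (p.2 * u p.1)) (μ.prod ν) :=
    measurable_bigJump.comp_aemeasurable (measurable_snd.aemeasurable.mul
      (hu.comp_quasiMeasurePreserving Measure.quasiMeasurePreserving_fst))
  rw [lintegral_lintegral_swap hmeas, ← lintegral_const_mul' _ _ ENNReal.ofReal_ne_top]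
  refine lintegral_mono fun ρ => ?_
  rw [← lintegral_const_mul' _ _ ENNReal.ofReal_ne_top]
  refine lintegral_mono fun x => bigJump_le_ofReal_mul hm ?_
  calc |ρ * u x| = |ρ| * |u x| := abs_mul _ _
    _ ≤ |ρ| * (m * |g x|) := mul_le_mul_of_nonneg_left (hug x) (abs_nonneg ρ)
    _ = m * |ρ * g x| := by rw [abs_mul]; ring

theorem lintegral_lintegral_bigJump_mul_le_add [SFinite μ] {ν : Measure ℝ}
    (hν : ν {ρ | 1 < |ρ|} ≠ ∞) {u g : X → ℝ} (hu : AEMeasurable u μ) {m : ℝ} (hm : m ≤ 1)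
    (hug : ∀ x, |u x| ≤ m * |g x|) :
    ∫⁻ x, ∫⁻ ρ, bigJump (ρ * u x) ∂ν ∂μ ≤
      ENNReal.ofReal m * (∫⁻ ρ in {ρ : ℝ | 1 < |ρ|}, ∫⁻ x, bigJump (ρ * g x) ∂μ ∂ν) +
        (∫⁻ ρ in {ρ : ℝ | 1 < |ρ|}ᶜ, ENNReal.ofReal (min 1 (ρ ^ 2)) ∂ν) *
          ∫⁻ x, ENNReal.ofReal (u x ^ 2) ∂μ := by
  have : IsFiniteMeasure (ν.restrict {ρ | 1 < |ρ|}) := isFiniteMeasure_restrict.2 hν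
  set C := ∫⁻ ρ in {ρ : ℝ | 1 < |ρ|}ᶜ, ENNReal.ofReal (min 1 (ρ ^ 2)) ∂ν
  calc ∫⁻ x, ∫⁻ ρ, bigJump (ρ * u x) ∂ν ∂μ
      = ∫⁻ x, ((∫⁻ ρ in {ρ : ℝ | 1 < |ρ|}, bigJump (ρ * u x) ∂ν) +
          ∫⁻ ρ in {ρ : ℝ | 1 < |ρ|}ᶜ, bigJump (ρ * u x) ∂ν) ∂μ := by
        simp_rw [lintegral_add_compl _ (measurableSet_lt measurable_const measurable_abs)]
    _ ≤ ∫⁻ x, ((∫⁻ ρ in {ρ : ℝ | 1 < |ρ|}, bigJump (ρ * u x) ∂ν) +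
          C * ENNReal.ofReal (u x ^ 2)) ∂μ :=
        lintegral_mono fun x => add_le_add_right (setLIntegral_compl_bigJump_mul_le ν (u x)) _
    _ = (∫⁻ x, ∫⁻ ρ in {ρ : ℝ | 1 < |ρ|}, bigJump (ρ * u x) ∂ν ∂μ) +
          C * ∫⁻ x, ENNReal.ofReal (u x ^ 2) ∂μ := by
        rw [lintegral_add_right' _ ((hu.pow_const 2).ennreal_ofReal.const_mul C),
          lintegral_const_mul'' C (hu.pow_const 2).ennreal_ofReal]
    _ ≤ _ := by gcongr; exact lintegral_lintegral_bigJump_mul_le μ _ hu hm hug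

theorem lintegral_ofReal_sq_eq_eLpNorm_sq (u : X → ℝ) :
    ∫⁻ x, ENNReal.ofReal (u x ^ 2) ∂μ = eLpNorm u 2 μ ^ 2 := by
  have h := eLpNorm_nnreal_pow_eq_lintegral (f := u) (μ := μ) (p := 2) two_ne_zero
  norm_num at h
  rw [h]
  refine lintegral_congr fun x => ?_
  rw [Real.enorm_eq_ofReal_abs, ← ENNReal.ofReal_pow (abs_nonneg _), sq_abs]

end

theorem measure_one_lt_abs_le_lintegral_min_one_sq (ν : Measure ℝ) :
    ν {ρ : ℝ | 1 < |ρ|} ≤ ∫⁻ ρ, ENNReal.ofReal (min 1 (ρ ^ 2)) ∂ν :=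
  calc ν {ρ : ℝ | 1 < |ρ|} = ∫⁻ ρ in {ρ : ℝ | 1 < |ρ|}, 1 ∂ν := (setLIntegral_one _).symm
    _ ≤ ∫⁻ ρ in {ρ : ℝ | 1 < |ρ|}, ENNReal.ofReal (min 1 (ρ ^ 2)) ∂ν :=
        setLIntegral_mono' (measurableSet_lt measurable_const measurable_abs) fun ρ hρ => by
          rw [min_eq_left (by nlinarith [sq_abs ρ, hρ.out]), ENNReal.ofReal_one]
    _ ≤ _ := setLIntegral_le_lintegral _ _

section Convolution

variable {d : ℕ}

theorem aestronglyMeasurable_ballInt {G : Rd d → ℝ} (hG : AEStronglyMeasurable G volume) (R : ℝ) :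
    AEStronglyMeasurable (ballInt G R) volume := by
  have hS : MeasurableSet {p : Rd d × Rd d | dist p.2 p.1 < R} :=
    measurableSet_lt (measurable_snd.dist measurable_fst) measurable_const
  have hF : AEStronglyMeasurable
      ({p : Rd d × Rd d | dist p.2 p.1 < R}.indicator fun p => |G p.2|) (volume.prod volume) :=
    (hG.comp_quasiMeasurePreserving Measure.quasiMeasurePreserving_snd).norm.indicator hS
  refine hF.integral_prod_right'.congr (.of_forall fun x => ?_)
  rw [ballInt, ← integral_indicator measurableSet_ball]
  rfl

theorem aestronglyMeasurable_conv {φ G : Rd d → ℝ} (hφ : Measurable φ)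
    (hG : AEStronglyMeasurable G volume) : AEStronglyMeasurable (conv φ G) volume :=
  ((hG.comp_quasiMeasurePreserving Measure.quasiMeasurePreserving_snd).mul
    (hφ.comp (measurable_fst.sub measurable_snd)).aestronglyMeasurable).integral_prod_right'

theorem integrableOn_ball_abs {G : Rd d → ℝ} (hG : LocallyIntegrable G volume) (x : Rd d) (R : ℝ) :
    IntegrableOn (fun y => |G y|) (Metric.ball x R) volume :=
  ((hG.integrableOn_isCompact (isCompact_closedBall x R)).mono_set
    Metric.ball_subset_closedBall).abs

theorem ballInt_mono {G : Rd d → ℝ} (hG : LocallyIntegrable G volume) {r R : ℝ} (hrR : r ≤ R)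
    (x : Rd d) : ballInt G r x ≤ ballInt G R x :=
  setIntegral_mono_set (integrableOn_ball_abs hG x R) (.of_forall fun _ => abs_nonneg _)
    (Metric.ball_subset_ball hrR).eventuallyLE

theorem abs_conv_le_mul_ballInt {φ G : Rd d → ℝ} (hG : LocallyIntegrable G volume) {M r : ℝ}
    (hφM : ∀ y, |φ y| ≤ M) (hφr : ∀ y, r ≤ ‖y‖ → φ y = 0) (x : Rd d) :
    |conv φ G x| ≤ M * ballInt G r x := by
  have hsupp : ∀ y ∉ Metric.ball x r, G y * φ (x - y) = 0 := fun y hy => by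
    rw [hφr _ (by simpa [dist_eq_norm, norm_sub_rev] using hy), mul_zero]
  rw [conv, ← setIntegral_eq_integral_of_forall_compl_eq_zero hsupp, ballInt,
    ← integral_const_mul M, ← Real.norm_eq_abs]
  refine norm_integral_le_of_norm_le ((integrableOn_ball_abs hG x r).const_mul M)
    (.of_forall fun y => ?_)
  rw [norm_mul, mul_comm M, Real.norm_eq_abs, Real.norm_eq_abs]
  exact mul_le_mul_of_nonneg_left (hφM _) (abs_nonneg _)

end Convolution

theorem statement4_general {d : ℕ} (ν : Measure ℝ)
    (hνlevy : ∫⁻ ρ, ENNReal.ofReal (min 1 (ρ ^ 2)) ∂ν < ⊤)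
    (G : Rd d → ℝ) (hG : MeasureTheory.LocallyIntegrable G volume)
    (r R : ℝ) (hrR : r < R)
    (h1 : ∫⁻ ρ in {ρ : ℝ | 1 < |ρ|},
        (ENNReal.ofReal |ρ| * ∫⁻ α in Set.Ioi (1 / |ρ|),
          distFun (ballInt G R) α) ∂ν < ⊤)
    (h2 : ∫⁻ ρ in {ρ : ℝ | 1 < |ρ|},
        (ENNReal.ofReal (|ρ| ^ 2) * ∫⁻ α in Set.Ioc (0 : ℝ) (1 / |ρ|),
          ENNReal.ofReal α * distFun (ballInt G R) α) ∂ν < ⊤)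
    (φ : ℕ → Rd d → ℝ)
    (hφm : ∀ n, Measurable (φ n))
    (hφb : ∀ n, BddAbove (Set.range fun y => |φ n y|))
    (hφs : ∀ n, ∀ y : Rd d, r ≤ ‖y‖ → φ n y = 0)
    (hφ0 : Tendsto (fun n => ⨆ y, |φ n y|) atTop (𝓝 (0 : ℝ)))
    (hL2 : Tendsto (fun n => eLpNorm (conv (φ n) G) 2 volume) atTop (𝓝 (0 : ℝ≥0∞))) :
    Tendsto (fun n => ∫⁻ x, ∫⁻ ρ,
        ENNReal.ofReal (if 1 < |ρ * conv (φ n) G x| then |ρ * conv (φ n) G x| else 0) ∂ν)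
      atTop (𝓝 (0 : ℝ≥0∞)) := by
  set M := fun n => ⨆ y, |φ n y|
  set K := ∫⁻ ρ in {ρ : ℝ | 1 < |ρ|}, ∫⁻ x, bigJump (ρ * ballInt G R x) ∂volume ∂ν
  set C := ∫⁻ ρ in {ρ : ℝ | 1 < |ρ|}ᶜ, ENNReal.ofReal (min 1 (ρ ^ 2)) ∂ν
  have hK : K ≠ ∞ := (setLIntegral_lintegral_bigJump_mul_lt_top volume
    (aestronglyMeasurable_ballInt hG.aestronglyMeasurable R).aemeasurable h1 h2).ne
  have hC : C ≠ ∞ := ((setLIntegral_le_lintegral _ _).trans_lt hνlevy).ne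
  have hνs : ν {ρ | 1 < |ρ|} ≠ ∞ :=
    ((measure_one_lt_abs_le_lintegral_min_one_sq ν).trans_lt hνlevy).ne
  have hφM : ∀ n y, |φ n y| ≤ M n := fun n => le_ciSup (hφb n)
  have hbound : ∀ n, M n ≤ 1 → ∫⁻ x, ∫⁻ ρ, bigJump (ρ * conv (φ n) G x) ∂ν ≤
      ENNReal.ofReal (M n) * K + C * eLpNorm (conv (φ n) G) 2 volume ^ 2 := fun n hn => by
    rw [← lintegral_ofReal_sq_eq_eLpNorm_sq]
    refine lintegral_lintegral_bigJump_mul_le_add volume hνs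
      (aestronglyMeasurable_conv (hφm n) hG.aestronglyMeasurable).aemeasurable hn fun x => ?_
    calc |conv (φ n) G x| ≤ M n * ballInt G r x := abs_conv_le_mul_ballInt hG (hφM n) (hφs n) x
      _ ≤ M n * |ballInt G R x| := mul_le_mul_of_nonneg_left
          ((ballInt_mono hG hrR.le x).trans (le_abs_self _)) ((abs_nonneg _).trans (hφM n 0))
  have hlim : Tendsto (fun n => ENNReal.ofReal (M n) * K + C * eLpNorm (conv (φ n) G) 2 volume ^ 2)
      atTop (𝓝 0) := by
    have hM : Tendsto (fun n => ENNReal.ofReal (M n)) atTop (𝓝 0) := by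
      simpa using ENNReal.tendsto_ofReal hφ0
    have hL : Tendsto (fun n => eLpNorm (conv (φ n) G) 2 volume ^ 2) atTop (𝓝 0) :=
      (ENNReal.continuous_pow 2).tendsto' 0 0 (zero_pow two_ne_zero) |>.comp hL2
    simpa using (ENNReal.Tendsto.mul_const hM (.inr hK)).add
      (ENNReal.Tendsto.const_mul hL (.inr hC))
  exact tendsto_of_tendsto_of_tendsto_of_le_of_le' tendsto_const_nhds hlim
    (.of_forall fun _ => zero_le) ((hφ0.eventually (eventually_le_nhds one_pos)).mono hbound)

/-- under conditions (wiesonur1) and (wiesonur2) on the Lévy measure `ν`,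
and if additionally `‖G*φ_n‖_{L²} → 0` and `‖φ_n‖_∞ → 0`, the big-jump integrals
of `φ_n * G` tend to `0`. -/
theorem statement4 {d : ℕ} (hd : 0 < d) (ν : Measure ℝ)
    (hν0 : ν {0} = 0)
    (hνlevy : ∫⁻ ρ, ENNReal.ofReal (min 1 (ρ ^ 2)) ∂ν < ⊤)
    (G : Rd d → ℝ) (hG : MeasureTheory.LocallyIntegrable G volume)
    (r R : ℝ) (hr : 0 < r) (hrR : r < R)
    (h1 : ∫⁻ ρ in {ρ : ℝ | 1 < |ρ|},
        (ENNReal.ofReal |ρ| * ∫⁻ α in Set.Ioi (1 / |ρ|),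
          distFun (ballInt G R) α) ∂ν < ⊤)
    (h2 : ∫⁻ ρ in {ρ : ℝ | 1 < |ρ|},
        (ENNReal.ofReal (|ρ| ^ 2) * ∫⁻ α in Set.Ioc (0 : ℝ) (1 / |ρ|),
          ENNReal.ofReal α * distFun (ballInt G R) α) ∂ν < ⊤)
    (φ : ℕ → Rd d → ℝ)
    (hφm : ∀ n, Measurable (φ n))
    (hφb : ∀ n, BddAbove (Set.range fun y => |φ n y|))
    (hφs : ∀ n, ∀ y : Rd d, r ≤ ‖y‖ → φ n y = 0)
    (hφ0 : Tendsto (fun n => ⨆ y, |φ n y|) atTop (𝓝 (0 : ℝ)))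
    (hL2 : Tendsto (fun n => eLpNorm (conv (φ n) G) 2 volume) atTop (𝓝 (0 : ℝ≥0∞))) :
    Tendsto (fun n => ∫⁻ x, ∫⁻ ρ,
        ENNReal.ofReal (if 1 < |ρ * conv (φ n) G x| then |ρ * conv (φ n) G x| else 0) ∂ν)
      atTop (𝓝 (0 : ℝ≥0∞)) :=
  statement4_general ν hνlevy G hG r R hrR h1 h2 φ hφm hφb hφs hφ0 hL2
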